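/- For fixed β > 0 and ε ∈ (0, 1/β), with t_n = n³, s_n = n and y_n = (β/2)t_n − (1/β − ε) log log t_n, the quantity e^{β y_l − (β²/2)(t_l − t_k)} Φ(−y_l/√(t_l − t_k)) is at most (1/√(2π)) · √(t_{2n}) / y_n for all n ≤ k < l ≤ 2n, and this bound tends to 0 as n → ∞. -/

import Mathlib

/-!
Completing the square, `exp (β y - β² T / 2) · exp (-y² / (2T)) = exp (-(y - β T)² / (2T)) ≤ 1`,
so Mills' bound `Φ(-x) ≤ φ(x) / x` at `x = y / √T` leaves only `√T / (√(2π) y)`.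
For `n ≤ k < l ≤ 2n` we have `T = t_l - t_k ≤ t_{2n}`; since the `log log` correction in `y_n`
is `O(n)`, eventually `y_n ≥ (β/4) n³` and `y_n ≤ y_l` for `l > n`, which gives the bound
and its decay like `n^{-3/2}`.
-/

open Real MeasureTheory Filter Topology Set

theorem integral_Iic_exp_neg_sq_div_two_le {x : ℝ} (hx : 0 < x) :
    ∫ z in Iic (-x), exp (-z ^ 2 / 2) ≤ exp (-x ^ 2 / 2) / x := by
  have hderiv (z : ℝ) : HasDerivAt (fun w ↦ exp (-w ^ 2 / 2)) (-z * exp (-z ^ 2 / 2)) z := by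
    have h : HasDerivAt (fun w : ℝ ↦ -w ^ 2 / 2) (-(2 * z) / 2) z := by
      simpa using (hasDerivAt_pow 2 z).fun_neg.div_const 2
    convert h.exp using 1
    ring
  have hint : Integrable (fun z : ℝ ↦ exp (-z ^ 2 / 2)) := by
    simpa [div_eq_inv_mul] using integrable_exp_neg_mul_sq (b := 2⁻¹) (by norm_num)
  have hint' : Integrable (fun z : ℝ ↦ -z * exp (-z ^ 2 / 2)) := by
    simpa [div_eq_inv_mul] using (integrable_mul_exp_neg_mul_sq (b := 2⁻¹) (by norm_num)).neg
  have hlim : Tendsto (fun w : ℝ ↦ exp (-w ^ 2 / 2)) atBot (𝓝 0) := by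
    have hsq : Tendsto (fun w : ℝ ↦ w ^ 2) atBot atTop :=
      ((tendsto_pow_atTop two_ne_zero).comp tendsto_neg_atBot_atTop).congr neg_sq
    exact tendsto_exp_atBot.comp ((tendsto_neg_atTop_atBot.comp hsq).atBot_div_const two_pos)
  have hFTC : ∫ z in Iic (-x), -z * exp (-z ^ 2 / 2) = exp (-x ^ 2 / 2) := by
    simpa using integral_Iic_of_hasDerivAt_of_tendsto' (a := -x) (fun z _ ↦ hderiv z)
      hint'.integrableOn hlim
  calc ∫ z in Iic (-x), exp (-z ^ 2 / 2)
      ≤ ∫ z in Iic (-x), x⁻¹ * (-z * exp (-z ^ 2 / 2)) := by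
        refine setIntegral_mono_on hint.integrableOn (hint'.integrableOn.const_mul _)
          measurableSet_Iic fun z hz ↦ ?_
        rw [← mul_assoc]
        refine le_mul_of_one_le_left (exp_pos _).le ?_
        rw [le_inv_mul_iff₀ hx, mul_one]
        linarith [mem_Iic.1 hz]
    _ = exp (-x ^ 2 / 2) / x := by rw [integral_const_mul, hFTC, inv_mul_eq_div]

theorem exp_mul_integral_gaussian_tail_le (β : ℝ) {y T : ℝ} (hy : 0 < y) (hT : 0 < T) :
    exp (β * y - β ^ 2 / 2 * T) * ∫ z in Iic (-y / √T), 1 / √(2 * π) * exp (-z ^ 2 / 2)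
      ≤ 1 / √(2 * π) * √T / y := by
  have hsT : 0 < √T := sqrt_pos.2 hT
  have hsquare : β * y - β ^ 2 / 2 * T - (y / √T) ^ 2 / 2 = -(y - β * T) ^ 2 / (2 * T) := by
    rw [div_pow, sq_sqrt hT.le]
    field_simp
    ring
  calc exp (β * y - β ^ 2 / 2 * T) * ∫ z in Iic (-y / √T), 1 / √(2 * π) * exp (-z ^ 2 / 2)
      ≤ exp (β * y - β ^ 2 / 2 * T) * (1 / √(2 * π) * (exp (-(y / √T) ^ 2 / 2) / (y / √T))) := by
        rw [integral_const_mul, neg_div]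
        gcongr
        exact integral_Iic_exp_neg_sq_div_two_le (div_pos hy hsT)
    _ = 1 / √(2 * π) * √T / y * exp (-(y - β * T) ^ 2 / (2 * T)) := by
        rw [← hsquare, exp_sub (β * y - β ^ 2 / 2 * T), neg_div, exp_neg]
        field_simp
    _ ≤ 1 / √(2 * π) * √T / y := by
        refine mul_le_of_le_one_right (by positivity) (exp_le_one_iff.2 ?_)
        exact div_nonpos_of_nonpos_of_nonneg (neg_nonpos.2 (sq_nonneg _)) (by positivity)

theorem abs_mul_log_log_pow_three_le (c : ℝ) {x : ℝ} (hx : 2 ≤ x) :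
    |c * log (log (x ^ 3))| ≤ 3 * |c| * x := by
  have hlog : 1 ≤ log (x ^ 3) := by
    rw [le_log_iff_exp_le (by positivity)]
    calc exp 1 ≤ 2 ^ 3 := by linarith [exp_one_lt_d9]
      _ ≤ x ^ 3 := by gcongr
  have hloglog : |log (log (x ^ 3))| ≤ 3 * x := by
    rw [abs_of_nonneg (log_nonneg hlog)]
    calc log (log (x ^ 3)) ≤ log (x ^ 3) := log_le_self (by linarith)
      _ = 3 * log x := by rw [log_pow]; norm_num
      _ ≤ 3 * x := by gcongr; exact log_le_self (by linarith)
  rw [abs_mul, mul_comm 3, mul_assoc]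
  exact mul_le_mul_of_nonneg_left hloglog (abs_nonneg c)

/-- The level `y_n` of the paper, with `c = 1/β - ε`. -/
noncomputable def cubeLevel (β c : ℝ) (n : ℕ) : ℝ :=
  β / 2 * (n : ℝ) ^ 3 - c * log (log ((n : ℝ) ^ 3))

theorem eventually_two_le_and_abs_le {β : ℝ} (hβ : 0 < β) (c : ℝ) :
    ∀ᶠ n : ℕ in atTop, 2 ≤ n ∧ 12 * |c| ≤ β * n :=
  (eventually_ge_atTop 2).and
    ((tendsto_natCast_atTop_atTop.const_mul_atTop hβ).eventually_ge_atTop _)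

theorem cube_div_four_le_cubeLevel {β c : ℝ} {n : ℕ} (hn : 2 ≤ n) (hc : 12 * |c| ≤ β * n) :
    β / 4 * (n : ℝ) ^ 3 ≤ cubeLevel β c n := by
  have hn' : (2 : ℝ) ≤ n := by exact_mod_cast hn
  have hβ : 0 ≤ β := by nlinarith [abs_nonneg c]
  have hlog := (abs_le.1 (abs_mul_log_log_pow_three_le c hn')).2
  have hcn : 12 * |c| * n ≤ β * n ^ 2 := by nlinarith
  have hsq : β * n ^ 2 ≤ β * n ^ 3 := by gcongr <;> linarith
  rw [cubeLevel]
  linarith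

theorem cubeLevel_le_of_lt {β c : ℝ} {n l : ℕ} (hn : 2 ≤ n) (hc : 12 * |c| ≤ β * n)
    (hnl : n < l) : cubeLevel β c n ≤ cubeLevel β c l := by
  have hn' : (2 : ℝ) ≤ n := by exact_mod_cast hn
  have hnl' : (n : ℝ) + 1 ≤ l := by exact_mod_cast hnl
  have hβ : 0 ≤ β := by nlinarith [abs_nonneg c]
  have hlog_n := (abs_le.1 (abs_mul_log_log_pow_three_le c hn')).1
  have hlog_l := (abs_le.1 (abs_mul_log_log_pow_three_le c (by linarith : (2 : ℝ) ≤ l))).2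
  have hcube : (l : ℝ) ^ 2 ≤ (l : ℝ) ^ 3 - (n : ℝ) ^ 3 := by
    have : (n : ℝ) ^ 3 ≤ ((l : ℝ) - 1) ^ 3 := by gcongr; linarith
    nlinarith
  have hcl : 12 * |c| * l ≤ β * l ^ 2 := by
    have := mul_le_mul_of_nonneg_right (hc.trans (by gcongr) : 12 * |c| ≤ β * l)
      (by linarith : (0 : ℝ) ≤ l)
    linarith
  have hβcube := mul_le_mul_of_nonneg_left hcube hβ
  have hcn : |c| * n ≤ |c| * l := by gcongr
  rw [cubeLevel, cubeLevel]
  linarith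

theorem tendsto_sqrt_div_cubeLevel {β : ℝ} (hβ : 0 < β) (c : ℝ) :
    Tendsto (fun n : ℕ ↦ √(((2 * n : ℕ) : ℝ) ^ 3) / cubeLevel β c n) atTop (𝓝 0) := by
  have hlower : ∀ᶠ n : ℕ in atTop, (2 : ℝ) ≤ n ∧ β / 4 * (n : ℝ) ^ 3 ≤ cubeLevel β c n := by
    filter_upwards [eventually_two_le_and_abs_le hβ c] with n ⟨hn, hc⟩
    exact ⟨by exact_mod_cast hn, cube_div_four_le_cubeLevel hn hc⟩
  refine squeeze_zero' ?_ ?_ (tendsto_const_div_atTop_nhds_zero_nat (12 / β))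
  · filter_upwards [hlower] with n ⟨_, hy⟩
    exact div_nonneg (sqrt_nonneg _) ((by positivity : (0 : ℝ) ≤ β / 4 * n ^ 3).trans hy)
  · filter_upwards [hlower] with n ⟨hn, hy⟩
    have hsqrt : √(((2 * n : ℕ) : ℝ) ^ 3) ≤ 3 * n ^ 2 := by
      refine sqrt_le_iff.2 ⟨by positivity, ?_⟩
      push_cast
      nlinarith [pow_le_pow_left₀ (by norm_num) hn 3]
    calc √(((2 * n : ℕ) : ℝ) ^ 3) / cubeLevel β c n ≤ 3 * n ^ 2 / (β / 4 * n ^ 3) :=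
          div_le_div₀ (by positivity) hsqrt (by positivity) hy
      _ = 12 / β / n := by field_simp; ring

theorem eta_six_bound_general (β ε : ℝ) (hβ : 0 < β)
    (Φ : ℝ → ℝ)
    (hΦ : ∀ z : ℝ, Φ z = ∫ y in Set.Iic z, (1 / Real.sqrt (2 * π)) * Real.exp (-y ^ 2 / 2))
    (t y : ℕ → ℝ)
    (ht : ∀ n : ℕ, t n = (n : ℝ) ^ 3)
    (hy : ∀ n : ℕ, y n = β / 2 * t n - (1 / β - ε) * Real.log (Real.log (t n))) :
    (∃ N : ℕ, ∀ n ≥ N, ∀ k l : ℕ, n ≤ k → k < l → l ≤ 2 * n →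
      Real.exp (β * y l - β ^ 2 / 2 * (t l - t k)) * Φ (-(y l) / Real.sqrt (t l - t k)) ≤
        (1 / Real.sqrt (2 * π)) * Real.sqrt (t (2 * n)) / y n) ∧
    Tendsto (fun n : ℕ => (1 / Real.sqrt (2 * π)) * Real.sqrt (t (2 * n)) / y n)
      atTop (nhds 0) := by
  obtain rfl : y = cubeLevel β (1 / β - ε) := funext fun n ↦ by rw [hy, ht, cubeLevel]
  obtain ⟨N, hN⟩ := eventually_atTop.1 (eventually_two_le_and_abs_le hβ (1 / β - ε))
  refine ⟨⟨N, fun n hn k l hnk hkl hl ↦ ?_⟩, ?_⟩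
  · obtain ⟨h2, hc⟩ := hN n hn
    have hn_pos : (0 : ℝ) < n := by exact_mod_cast (by omega : 0 < n)
    have hyn := (by positivity : 0 < β / 4 * (n : ℝ) ^ 3).trans_le
      (cube_div_four_le_cubeLevel h2 hc)
    have hynl := cubeLevel_le_of_lt h2 hc (hnk.trans_lt hkl)
    have hT : 0 < t l - t k := by
      rw [ht, ht, sub_pos]
      gcongr
    have hTle : t l - t k ≤ t (2 * n) := by
      rw [ht, ht, ht]
      have : (l : ℝ) ^ 3 ≤ ((2 * n : ℕ) : ℝ) ^ 3 := by gcongr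
      linarith [pow_nonneg (Nat.cast_nonneg (α := ℝ) k) 3]
    rw [hΦ]
    calc _ ≤ 1 / √(2 * π) * √(t l - t k) / cubeLevel β (1 / β - ε) l :=
          exp_mul_integral_gaussian_tail_le β (hyn.trans_le hynl) hT
      _ ≤ _ := by gcongr
  · simpa only [ht, mul_div_assoc, mul_zero] using
      (tendsto_sqrt_div_cubeLevel hβ (1 / β - ε)).const_mul (1 / √(2 * π))

theorem eta_six_bound (β ε : ℝ) (hβ : 0 < β) (hε : 0 < ε) (hεβ : ε < 1 / β)
    (Φ : ℝ → ℝ)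
    (hΦ : ∀ z : ℝ, Φ z = ∫ y in Set.Iic z, (1 / Real.sqrt (2 * π)) * Real.exp (-y ^ 2 / 2))
    (t y : ℕ → ℝ)
    (ht : ∀ n : ℕ, t n = (n : ℝ) ^ 3)
    (hy : ∀ n : ℕ, y n = β / 2 * t n - (1 / β - ε) * Real.log (Real.log (t n))) :
    (∃ N : ℕ, ∀ n ≥ N, ∀ k l : ℕ, n ≤ k → k < l → l ≤ 2 * n →
      Real.exp (β * y l - β ^ 2 / 2 * (t l - t k)) * Φ (-(y l) / Real.sqrt (t l - t k)) ≤
        (1 / Real.sqrt (2 * π)) * Real.sqrt (t (2 * n)) / y n) ∧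
    Tendsto (fun n : ℕ => (1 / Real.sqrt (2 * π)) * Real.sqrt (t (2 * n)) / y n)
      atTop (nhds 0) :=
  eta_six_bound_general β ε hβ Φ hΦ t y ht hy
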